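/- W_n is invariant under reversal of the orientation of the circle of a Gauss diagram: W_n(Ḡ) = W_n(G). -/
import Mathlib


/-!
A combinatorial model of Gauss diagrams of knot diagrams, following
Östlund, "Invariants of knot diagrams and relations among Reidemeister
moves".  Positions on the oriented circle are modeled by natural numbers,
listed in the cyclic order obtained by cutting the circle at a base point
which is not an endpoint of any arrow.
-/

/-- An arrow of a Gauss diagram: a signed, directed chord of the circle. -/
structure Arrow where
  tail : ℕ
  head : ℕ
  sign : ℤ
deriving DecidableEq

/-- A Gauss diagram: a finite set of signed arrows on the circle. -/
abbrev GaussDiagram := Finset Arrow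

/-- The endpoint positions of a Gauss diagram. -/
def endpoints (G : GaussDiagram) : Finset ℕ :=
  G.image Arrow.tail ∪ G.image Arrow.head

/-- The writhe of a Gauss diagram: the sum of the signs of all its arrows. -/
def writhe (G : GaussDiagram) : ℤ := ∑ a ∈ G, a.sign

/-- `x` lies strictly inside the chord of the arrow `a`. -/
def inArc (a : Arrow) (x : ℕ) : Prop :=
  min a.tail a.head < x ∧ x < max a.tail a.head

/-- Two arrows cross: their endpoints interleave on the circle. -/
def Crosses (a b : Arrow) : Prop := Xor' (inArc a b.tail) (inArc a b.head)

/-- Strict cyclic betweenness: starting at `x` and moving in the positive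
direction along the circle one meets `y` strictly before `z`. -/
def CycBtw (x y z : ℕ) : Prop :=
  (x < y ∧ y < z) ∨ (y < z ∧ z < x) ∨ (z < x ∧ x < y)

/-- `x` and `y` are cyclically adjacent among the points of `E`: no point of
`E` lies strictly between them on one of the two arcs joining them. -/
def AdjacentIn (E : Finset ℕ) (x y : ℕ) : Prop :=
  x ∈ E ∧ y ∈ E ∧ x ≠ y ∧
    ((∀ z ∈ E, z ≤ min x y ∨ max x y ≤ z) ∨ (∀ z ∈ E, min x y ≤ z ∧ z ≤ max x y))

/-- `y` is the immediate cyclic successor of `x` among the points of `E`. -/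
def SuccIn (E : Finset ℕ) (x y : ℕ) : Prop :=
  x ∈ E ∧ y ∈ E ∧ x ≠ y ∧
    ((x < y ∧ ∀ z ∈ E, ¬(x < z ∧ z < y)) ∨ (y < x ∧ ∀ z ∈ E, y ≤ z ∧ z ≤ x))

/-- An arrow is isolated in `G` if its head and tail are adjacent among all
endpoints of `G`. -/
def Isolated (G : GaussDiagram) (a : Arrow) : Prop :=
  AdjacentIn (endpoints G) a.tail a.head

/-- An endpoint selector: the tail or the head of an arrow. -/
def EndSel (u : Arrow → ℕ) : Prop := u = Arrow.tail ∨ u = Arrow.head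

/-- `S` matches the abstract pattern `P`: there is a bijection of arrows which
preserves heads/tails and the cyclic order of all endpoints (the signs of the
pattern arrows are ignored). -/
def MatchesPattern (P S : Finset Arrow) : Prop :=
  ∃ f : Arrow → Arrow, Set.BijOn f ↑P ↑S ∧
    ∀ u v w : Arrow → ℕ, EndSel u → EndSel v → EndSel w →
      ∀ a ∈ P, ∀ b ∈ P, ∀ c ∈ P,
        (CycBtw (u a) (v b) (w c) ↔ CycBtw (u (f a)) (v (f b)) (w (f c)))

/-- The arrow-diagram invariant associated to a pattern `P`: the sum, over all
subdiagrams of `G` matching `P`, of the product of the signs of the arrows of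
the subdiagram. -/
noncomputable def patCount (P : Finset Arrow) (G : GaussDiagram) : ℤ := by
  classical
  exact ∑ S ∈ G.powerset.filter (fun S => MatchesPattern P S), ∏ a ∈ S, a.sign

/-- The cyclic pattern `a_n`: `n` arrows arranged cyclically so that
consecutive arrows cross, meeting head to tail with the tail before the head,
and no other pairs cross. -/
def patternA (n : ℕ) : Finset Arrow :=
  (Finset.range n).image (fun i => ⟨2 * i, (2 * i + 3) % (2 * n), 1⟩)

/-- Orientation reversal of a Gauss diagram. -/
def revDiagram (G : GaussDiagram) : GaussDiagram :=
  G.image (fun a =>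
    ⟨(endpoints G).sup id - a.tail, (endpoints G).sup id - a.head, a.sign⟩)

/-- Mirroring: negate the signs of all arrows. -/
def mirror (G : GaussDiagram) : GaussDiagram :=
  G.image (fun a => ⟨a.tail, a.head, -a.sign⟩)

/-- The pattern `d_n`: the orientation reversal of `a_n`. -/
def patternD (n : ℕ) : Finset Arrow := revDiagram (patternA n)

/-- The pattern `w_n` (`n` odd): `n` pairwise crossing "diameters", directed
so that no two arrow heads are adjacent among the `2n` endpoints. -/
def patternW (n : ℕ) : Finset Arrow :=
  (Finset.range n).image
    (fun i => if i % 2 = 0 then ⟨i + n, i, 1⟩ else ⟨i, i + n, 1⟩)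

/-- The knot diagram invariant `A_n`. -/
noncomputable def A (n : ℕ) (G : GaussDiagram) : ℤ := patCount (patternA n) G

/-- The knot diagram invariant `D_n`. -/
noncomputable def D (n : ℕ) (G : GaussDiagram) : ℤ := patCount (patternD n) G

/-- The knot diagram invariant `W_n` (the weirdness for `n = 3`). -/
noncomputable def W (n : ℕ) (G : GaussDiagram) : ℤ := patCount (patternW n) G

/-- `G` is a connected sum of `G₁` and `G₂`: two points split the circle into
two arcs, every arrow of `G` has both endpoints on one of the arcs, and the
arrows on the two arcs form `G₁` and `G₂` respectively. -/
def IsConnectedSum (G G₁ G₂ : GaussDiagram) : Prop :=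
  Disjoint G₁ G₂ ∧ G = G₁ ∪ G₂ ∧
    ∃ c : ℕ, (∀ a ∈ G₁, a.tail < c ∧ a.head < c) ∧
      (∀ a ∈ G₂, c < a.tail ∧ c < a.head)

/-- A valid crossing sign. -/
def IsSign (s : ℤ) : Prop := s = 1 ∨ s = -1

/-- A positively directed Ω₁-move: adds one isolated arrow of sign `j`. -/
def Omega1Add (G G' : GaussDiagram) (j : ℤ) : Prop :=
  ∃ a : Arrow, a ∉ G ∧ a.tail ≠ a.head ∧ a.sign = j ∧ IsSign j ∧
    G' = insert a G ∧ Isolated G' a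

/-- An Ω₁-move (in either direction). -/
def IsOmega1 (G G' : GaussDiagram) : Prop :=
  (∃ j, Omega1Add G G' j) ∨ (∃ j, Omega1Add G' G j)

/-- A positively directed Ω₂-move: adds two arrows of opposite signs whose
tails are adjacent and whose heads are adjacent on the circle. -/
def Omega2Add (G G' : GaussDiagram) : Prop :=
  ∃ a b : Arrow, a ∉ G ∧ b ∉ G ∧ a ≠ b ∧
    a.tail ≠ a.head ∧ b.tail ≠ b.head ∧
    IsSign a.sign ∧ b.sign = -a.sign ∧
    G' = insert a (insert b G) ∧
    AdjacentIn (endpoints G') a.tail b.tail ∧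
    AdjacentIn (endpoints G') a.head b.head

/-- An Ω₂-move (in either direction). -/
def IsOmega2 (G G' : GaussDiagram) : Prop := Omega2Add G G' ∨ Omega2Add G' G

/-- The data of an Ω₃-move on `G`: three mutually crossing arrows of `G`
whose six endpoints form three sites of two adjacent endpoints each (one site
on each of the three strands of the changing disk), the arrows joining the
three sites pairwise. -/
structure Omega3Data (G : GaussDiagram) where
  a : Arrow
  b : Arrow
  c : Arrow
  q1 : ℕ
  q2 : ℕ
  q3 : ℕ
  q4 : ℕ
  q5 : ℕ
  q6 : ℕ
  ha : a ∈ G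
  hb : b ∈ G
  hc : c ∈ G
  hab : a ≠ b
  hac : a ≠ c
  hbc : b ≠ c
  cab : Crosses a b
  cac : Crosses a c
  cbc : Crosses b c
  adj12 : AdjacentIn (endpoints G) q1 q2
  adj34 : AdjacentIn (endpoints G) q3 q4
  adj56 : AdjacentIn (endpoints G) q5 q6
  ea : ({a.tail, a.head} : Finset ℕ) ⊆ {q1, q2, q3, q4}
  eb : ({b.tail, b.head} : Finset ℕ) ⊆ {q1, q2, q5, q6}
  ec : ({c.tail, c.head} : Finset ℕ) ⊆ {q3, q4, q5, q6}
  hq : ({q1, q2, q3, q4, q5, q6} : Finset ℕ) =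
    {a.tail, a.head, b.tail, b.head, c.tail, c.head}

/-- Interchange the two adjacent endpoints at each of the three sites. -/
def swap6 (q1 q2 q3 q4 q5 q6 x : ℕ) : ℕ :=
  if x = q1 then q2 else if x = q2 then q1 else
  if x = q3 then q4 else if x = q4 then q3 else
  if x = q5 then q6 else if x = q6 then q5 else x

/-- The effect of the Ω₃-move on an arrow. -/
def Omega3Data.mapArrow {G : GaussDiagram} (d : Omega3Data G) (e : Arrow) : Arrow :=
  ⟨swap6 d.q1 d.q2 d.q3 d.q4 d.q5 d.q6 e.tail,
   swap6 d.q1 d.q2 d.q3 d.q4 d.q5 d.q6 e.head, e.sign⟩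

/-- The result of the Ω₃-move determined by `d`: the two adjacent endpoints at
each of the three sites are interchanged, all other arrows are unchanged. -/
def Omega3Move (G : GaussDiagram) (d : Omega3Data G) : GaussDiagram :=
  (G \ {d.a, d.b, d.c}) ∪ {d.mapArrow d.a, d.mapArrow d.b, d.mapArrow d.c}

/-- An Ω₃-move (in either direction). -/
def IsOmega3 (G G' : GaussDiagram) : Prop :=
  (∃ d : Omega3Data G, G' = Omega3Move G d) ∨
  (∃ d : Omega3Data G', G = Omega3Move G' d)

/-- `x` is the position of a tail of one of the three affected arrows. -/
def TailPos {G : GaussDiagram} (d : Omega3Data G) (x : ℕ) : Prop :=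
  x = d.a.tail ∨ x = d.b.tail ∨ x = d.c.tail

/-- `x` is the position of a head of one of the three affected arrows. -/
def HeadPos {G : GaussDiagram} (d : Omega3Data G) (x : ℕ) : Prop :=
  x = d.a.head ∨ x = d.b.head ∨ x = d.c.head

/-- The move determined by `d` has class `Ω₃ᵢⱼₖₘ`: listing the three sites in
the order top, middle, bottom strand (paired each with the opposite arrow,
i.e., the one not meeting that site), the top site carries two tails (two
overcrossings) and the bottom site two heads; `i`, `j`, `k` are the signs of
the crossings between the top–middle, top–bottom and middle–bottom strands
respectively, and `m = 1` iff the move is descending, i.e. the three strands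
are visited in the cyclic order top–middle–bottom along the knot. -/
def Omega3Data.IsClass {G : GaussDiagram} (d : Omega3Data G) (i j k m : ℤ) : Prop :=
  (m = 1 ∨ m = -1) ∧
  ∃ p : Fin 3 → (ℕ × ℕ) × Arrow,
    Set.range p = {((d.q1, d.q2), d.c), ((d.q3, d.q4), d.b), ((d.q5, d.q6), d.a)} ∧
    TailPos d (p 0).1.1 ∧ TailPos d (p 0).1.2 ∧
    HeadPos d (p 2).1.1 ∧ HeadPos d (p 2).1.2 ∧
    (p 2).2.sign = i ∧ (p 1).2.sign = j ∧ (p 0).2.sign = k ∧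
    (m = 1 ↔ CycBtw (p 0).1.1 (p 1).1.1 (p 2).1.1)

/-- An Ω₃-move of class `Ω₃ᵢⱼₖₘ` (in either direction; the class of a move
does not depend on the direction in which it is performed). -/
def IsOmega3Class (i j k m : ℤ) (G G' : GaussDiagram) : Prop :=
  (∃ d : Omega3Data G, G' = Omega3Move G d ∧ d.IsClass i j k m) ∨
  (∃ d : Omega3Data G', G = Omega3Move G' d ∧ d.IsClass i j k m)

/-- A descending Ω₃-move. -/
def IsDescendingOmega3 (G G' : GaussDiagram) : Prop :=
  ∃ i j k, IsOmega3Class i j k 1 G G'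

/-- An ascending Ω₃-move. -/
def IsAscendingOmega3 (G G' : GaussDiagram) : Prop :=
  ∃ i j k, IsOmega3Class i j k (-1) G G'

/-- A Reidemeister move of Gauss diagrams. -/
def RMove (G G' : GaussDiagram) : Prop :=
  IsOmega1 G G' ∨ IsOmega2 G G' ∨ IsOmega3 G G'

/-- Reversal map on arrows, relative to a top position `M`. -/
def rMap (M : ℕ) (a : Arrow) : Arrow := ⟨M - a.tail, M - a.head, a.sign⟩

/-- Cyclic reversal of positions on a circle with `2n` marked points. -/
def rho (n x : ℕ) : ℕ := (2 * n - x) % (2 * n)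

/-- The reversal symmetry of the pattern `w_n`. -/
def sigmaW (n : ℕ) (e : Arrow) : Arrow := ⟨rho n e.tail, rho n e.head, e.sign⟩

lemma cycBtw_sub {M x y z : ℕ} (hx : x ≤ M) (hy : y ≤ M) (hz : z ≤ M) :
    CycBtw (M - x) (M - y) (M - z) ↔ CycBtw z y x := by
  unfold CycBtw; omega

lemma rho_eq {n x : ℕ} (hn : 0 < n) (hx : x < 2 * n) :
    rho n x = if x = 0 then 0 else 2 * n - x := by
  unfold rho
  split
  · simp [*, Nat.mod_self]
  · exact Nat.mod_eq_of_lt (by omega)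

lemma rho_lt {n x : ℕ} (hn : 0 < n) (hx : x < 2 * n) : rho n x < 2 * n := by
  rw [rho_eq hn hx]; split <;> omega

lemma rho_rho {n x : ℕ} (hn : 0 < n) (hx : x < 2 * n) : rho n (rho n x) = x := by
  rw [rho_eq hn hx]
  split
  · subst ‹x = 0›; rw [rho_eq hn (by omega)]; simp
  · rw [rho_eq hn (by omega)]; split <;> omega

lemma cycBtw_rho {n x y z : ℕ} (hn : 0 < n) (hx : x < 2 * n) (hy : y < 2 * n)
    (hz : z < 2 * n) : CycBtw (rho n x) (rho n y) (rho n z) ↔ CycBtw z y x := by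
  rw [rho_eq hn hx, rho_eq hn hy, rho_eq hn hz]
  unfold CycBtw
  split <;> split <;> split <;> omega

lemma mem_patternW_lt {n : ℕ} {e : Arrow} (he : e ∈ patternW n) :
    e.tail < 2 * n ∧ e.head < 2 * n := by
  simp only [patternW, Finset.mem_image, Finset.mem_range] at he
  obtain ⟨i, hi, rfl⟩ := he
  split <;> simp <;> omega

lemma sigmaW_mem {n : ℕ} (hn : Odd n) {e : Arrow} (he : e ∈ patternW n) :
    sigmaW n e ∈ patternW n := by
  have hn2 : n % 2 = 1 := Nat.odd_iff.mp hn
  have hn0 : 0 < n := by omega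
  simp only [patternW, Finset.mem_image, Finset.mem_range] at he ⊢
  obtain ⟨i, hi, rfl⟩ := he
  rcases Nat.eq_zero_or_pos i with rfl | hipos
  · refine ⟨0, hn0, ?_⟩
    simp only [Nat.mul_zero, Nat.zero_mod, if_pos rfl, sigmaW]
    have h1 : rho n n = n := by rw [rho_eq hn0 (by omega)]; split <;> omega
    have h2 : rho n 0 = 0 := by rw [rho_eq hn0 (by omega)]; simp
    simp [h1, h2]
  · refine ⟨n - i, by omega, ?_⟩
    rcases Nat.even_or_odd i with hi2 | hi2
    · have hi2' : i % 2 = 0 := Nat.even_iff.mp hi2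
      have hj2 : (n - i) % 2 = 1 := by omega
      rw [if_pos hi2', if_neg (by omega)]
      simp only [sigmaW]
      have h1 : rho n (i + n) = n - i := by rw [rho_eq hn0 (by omega)]; split <;> omega
      have h2 : rho n i = 2 * n - i := by rw [rho_eq hn0 (by omega)]; split <;> omega
      simp only [h1, h2]
      congr 1 <;> omega
    · have hi2' : i % 2 = 1 := Nat.odd_iff.mp hi2
      have hj2 : (n - i) % 2 = 0 := by omega
      rw [if_pos hj2, if_neg (show ¬ i % 2 = 0 by omega)]
      simp only [sigmaW]
      have h1 : rho n i = 2 * n - i := by rw [rho_eq hn0 (by omega)]; split <;> omega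
      have h2 : rho n (i + n) = n - i := by rw [rho_eq hn0 (by omega)]; split <;> omega
      simp only [h1, h2]
      congr 1 <;> omega

lemma sigmaW_sigmaW {n : ℕ} (hn : 0 < n) {e : Arrow} (ht : e.tail < 2 * n)
    (hh : e.head < 2 * n) : sigmaW n (sigmaW n e) = e := by
  cases e
  simp only [sigmaW] at *
  rw [rho_rho hn ht, rho_rho hn hh]

lemma sigmaW_bijOn {n : ℕ} (hn : Odd n) :
    Set.BijOn (sigmaW n) ↑(patternW n) ↑(patternW n) := by
  have hn0 : 0 < n := hn.pos
  refine ⟨fun e he => sigmaW_mem hn he, ?_, ?_⟩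
  · intro a ha b hb hab
    have ha' := mem_patternW_lt (Finset.mem_coe.mp ha)
    have hb' := mem_patternW_lt (Finset.mem_coe.mp hb)
    rw [← sigmaW_sigmaW hn0 ha'.1 ha'.2, hab, sigmaW_sigmaW hn0 hb'.1 hb'.2]
  · intro y hy
    have hy' := mem_patternW_lt (Finset.mem_coe.mp hy)
    exact ⟨sigmaW n y, sigmaW_mem hn (Finset.mem_coe.mp hy),
      sigmaW_sigmaW hn0 hy'.1 hy'.2⟩

lemma endSel_rMap {u : Arrow → ℕ} (hu : EndSel u) (M : ℕ) (a : Arrow) :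
    u (rMap M a) = M - u a := by
  rcases hu with rfl | rfl <;> rfl

lemma endSel_sigmaW {u : Arrow → ℕ} (hu : EndSel u) (n : ℕ) (a : Arrow) :
    u (sigmaW n a) = rho n (u a) := by
  rcases hu with rfl | rfl <;> rfl

lemma endSel_lt {u : Arrow → ℕ} (hu : EndSel u) {n : ℕ} {a : Arrow}
    (ha : a ∈ patternW n) : u a < 2 * n := by
  rcases hu with rfl | rfl
  · exact (mem_patternW_lt ha).1
  · exact (mem_patternW_lt ha).2

lemma rMap_rMap {M : ℕ} {a : Arrow} (h1 : a.tail ≤ M) (h2 : a.head ≤ M) :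
    rMap M (rMap M a) = a := by
  cases a
  simp only [rMap] at *
  congr 1 <;> omega

lemma matches_rev {n : ℕ} (hn : Odd n) (M : ℕ) (S : Finset Arrow)
    (hS : ∀ a ∈ S, a.tail ≤ M ∧ a.head ≤ M)
    (h : MatchesPattern (patternW n) S) :
    MatchesPattern (patternW n) (S.image (rMap M)) := by
  have hn0 : 0 < n := hn.pos
  obtain ⟨f, hbij, hcyc⟩ := h
  refine ⟨rMap M ∘ f ∘ sigmaW n, ?_, ?_⟩
  · have hr : Set.BijOn (rMap M) ↑S ↑(S.image (rMap M)) := by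
      refine ⟨fun a ha => ?_, fun a ha b hb hab => ?_, fun y hy => ?_⟩
      · exact Finset.mem_coe.mpr (Finset.mem_image_of_mem _ (Finset.mem_coe.mp ha))
      · have ha' := hS a (Finset.mem_coe.mp ha)
        have hb' := hS b (Finset.mem_coe.mp hb)
        rw [← rMap_rMap ha'.1 ha'.2, hab, rMap_rMap hb'.1 hb'.2]
      · rw [Finset.coe_image] at hy
        exact hy
    exact hr.comp (hbij.comp (sigmaW_bijOn hn))
  · intro u v w hu hv hw a ha b hb c hc
    have hsa := sigmaW_mem hn ha
    have hsb := sigmaW_mem hn hb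
    have hsc := sigmaW_mem hn hc
    have hfa := hS _ (Finset.mem_coe.mp (hbij.mapsTo (Finset.mem_coe.mpr hsa)))
    have hfb := hS _ (Finset.mem_coe.mp (hbij.mapsTo (Finset.mem_coe.mpr hsb)))
    have hfc := hS _ (Finset.mem_coe.mp (hbij.mapsTo (Finset.mem_coe.mpr hsc)))
    have hle : ∀ {x : Arrow} {u : Arrow → ℕ}, EndSel u →
        x.tail ≤ M ∧ x.head ≤ M → u x ≤ M := by
      rintro x u (rfl | rfl) hx
      · exact hx.1
      · exact hx.2
    calc CycBtw (u a) (v b) (w c)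
        ↔ CycBtw (rho n (w c)) (rho n (v b)) (rho n (u a)) :=
          (cycBtw_rho hn0 (endSel_lt hw hc) (endSel_lt hv hb) (endSel_lt hu ha)).symm
      _ ↔ CycBtw (w (sigmaW n c)) (v (sigmaW n b)) (u (sigmaW n a)) := by
          rw [endSel_sigmaW hw, endSel_sigmaW hv, endSel_sigmaW hu]
      _ ↔ CycBtw (w (f (sigmaW n c))) (v (f (sigmaW n b))) (u (f (sigmaW n a))) :=
          hcyc w v u hw hv hu _ hsc _ hsb _ hsa
      _ ↔ CycBtw (u ((rMap M ∘ f ∘ sigmaW n) a)) (v ((rMap M ∘ f ∘ sigmaW n) b))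
            (w ((rMap M ∘ f ∘ sigmaW n) c)) := by
          simp only [Function.comp_apply, endSel_rMap hu, endSel_rMap hv, endSel_rMap hw]
          exact (cycBtw_sub (hle hu hfa) (hle hv hfb) (hle hw hfc)).symm

/-- `W_n` is invariant under reversal of the orientation of
the circle of a Gauss diagram. -/
theorem W_reversal_invariant (n : ℕ) (hn : Odd n) (G : GaussDiagram) :
    W n (revDiagram G) = W n G := by
  classical
  set M := (endpoints G).sup id with hM
  have hG : ∀ a ∈ G, a.tail ≤ M ∧ a.head ≤ M := by
    intro a ha
    constructor
    · exact Finset.le_sup (f := id)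
        (Finset.mem_union_left _ (Finset.mem_image_of_mem _ ha))
    · exact Finset.le_sup (f := id)
        (Finset.mem_union_right _ (Finset.mem_image_of_mem _ ha))
  have hrev : revDiagram G = G.image (rMap M) := rfl
  have hrr : ∀ a : Arrow, a.tail ≤ M → a.head ≤ M → rMap M (rMap M a) = a :=
    fun _ h1 h2 => rMap_rMap h1 h2
  -- bound on endpoints of arrows of the reversed diagram
  have hG' : ∀ a ∈ revDiagram G, a.tail ≤ M ∧ a.head ≤ M := by
    intro a ha
    rw [hrev, Finset.mem_image] at ha
    obtain ⟨b, _, rfl⟩ := ha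
    exact ⟨Nat.sub_le _ _, Nat.sub_le _ _⟩
  have himg : ∀ S : Finset Arrow, (∀ a ∈ S, a.tail ≤ M ∧ a.head ≤ M) →
      (S.image (rMap M)).image (rMap M) = S := by
    intro S hS
    rw [Finset.image_image]
    rw [show S.image (rMap M ∘ rMap M) = S.image id from
      Finset.image_congr (fun a ha => hrr a (hS a ha).1 (hS a ha).2), Finset.image_id]
  unfold W patCount
  refine Finset.sum_nbij' (i := fun S => S.image (rMap M))
    (j := fun S => S.image (rMap M)) ?_ ?_ ?_ ?_ ?_
  · intro S hS
    rw [Finset.mem_filter, Finset.mem_powerset] at hS ⊢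
    obtain ⟨hsub, hmatch⟩ := hS
    have hbd : ∀ a ∈ S, a.tail ≤ M ∧ a.head ≤ M := fun a ha => hG' a (hsub ha)
    constructor
    · intro a ha
      rw [Finset.mem_image] at ha
      obtain ⟨b, hb, rfl⟩ := ha
      have hb' := hsub hb
      rw [hrev, Finset.mem_image] at hb'
      obtain ⟨c, hc, rfl⟩ := hb'
      rw [hrr c (hG c hc).1 (hG c hc).2]
      exact hc
    · exact matches_rev hn M S hbd hmatch
  · intro S hS
    rw [Finset.mem_filter, Finset.mem_powerset] at hS ⊢
    obtain ⟨hsub, hmatch⟩ := hS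
    have hbd : ∀ a ∈ S, a.tail ≤ M ∧ a.head ≤ M := fun a ha => hG a (hsub ha)
    constructor
    · rw [hrev]; exact Finset.image_subset_image hsub
    · exact matches_rev hn M S hbd hmatch
  · intro S hS
    rw [Finset.mem_filter, Finset.mem_powerset] at hS
    exact himg S (fun a ha => hG' a (hS.1 ha))
  · intro S hS
    rw [Finset.mem_filter, Finset.mem_powerset] at hS
    exact himg S (fun a ha => hG a (hS.1 ha))
  · intro S hS
    rw [Finset.mem_filter, Finset.mem_powerset] at hS
    have hbd : ∀ a ∈ S, a.tail ≤ M ∧ a.head ≤ M := fun a ha => hG' a (hS.1 ha)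
    have hinj : ∀ x ∈ S, ∀ y ∈ S, rMap M x = rMap M y → x = y := fun a ha b hb hab => by
      rw [← hrr a (hbd a ha).1 (hbd a ha).2, hab, hrr b (hbd b hb).1 (hbd b hb).2]
    rw [Finset.prod_image hinj]
    exact Finset.prod_congr rfl (fun x _ => rfl)
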